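/- Let S, A be finite nonempty sets, γ ∈ [0,1), let r : S × A → ℝ be bounded, and let p : S × A → (S → ℝ≥0) be a transition kernel; a policy π : S → (A → ℝ≥0) assigns a probability distribution over actions to each state. Suppose Q_old and Q_new are the unique fixed points of the operators (T_π Q)(s,a) = r(s,a) + γ ∑_{s'} p(s,a,s') ∑_{a'} π(a'|s') (β log π(a'|s') + Q(s',a')) for π = π_old and π = π_new respectively, where β > 0. If for every state s, ∑_a π_new(a|s)(β log π_new(a|s) + Q_old(s,a)) ≤ ∑_a π_old(a|s)(β log π_old(a|s) + Q_old(s,a)), then Q_new(s,a) ≤ Q_old(s,a) for all (s,a). -/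
import Mathlib


open Finset Real

theorem stmt_8 {S A : Type*} [Fintype S] [Fintype A] [Nonempty S] [Nonempty A]
    (γ : ℝ) (hγ0 : 0 ≤ γ) (hγ1 : γ < 1) (β : ℝ) (hβ : 0 < β)
    (r : S → A → ℝ) (p : S → A → S → ℝ)
    (hp0 : ∀ s a s', 0 ≤ p s a s') (hp1 : ∀ s a, ∑ s' : S, p s a s' = 1)
    (polOld polNew : S → A → ℝ)
    (hpolOld : ∀ s, (∀ a, 0 ≤ polOld s a) ∧ ∑ a : A, polOld s a = 1)
    (hpolNew : ∀ s, (∀ a, 0 ≤ polNew s a) ∧ ∑ a : A, polNew s a = 1)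
    (Qold Qnew : S → A → ℝ)
    (hQold : ∀ s a, Qold s a = r s a + γ * ∑ s' : S, p s a s' *
        ∑ a' : A, polOld s' a' * (β * Real.log (polOld s' a') + Qold s' a'))
    (hQnew : ∀ s a, Qnew s a = r s a + γ * ∑ s' : S, p s a s' *
        ∑ a' : A, polNew s' a' * (β * Real.log (polNew s' a') + Qnew s' a'))
    (himpr : ∀ s, ∑ a : A, polNew s a * (β * Real.log (polNew s a) + Qold s a) ≤
        ∑ a : A, polOld s a * (β * Real.log (polOld s a) + Qold s a)) :
    ∀ s a, Qnew s a ≤ Qold s a := by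
  obtain ⟨⟨s₀, a₀⟩, -, hmax⟩ := Finset.exists_max_image (Finset.univ : Finset (S × A))
    (fun x => Qnew x.1 x.2 - Qold x.1 x.2) ⟨Classical.arbitrary _, Finset.mem_univ _⟩
  set D := Qnew s₀ a₀ - Qold s₀ a₀ with hD
  have hle : ∀ s a, Qnew s a - Qold s a ≤ D := fun s a => hmax (s, a) (Finset.mem_univ _)
  -- key: inner difference ≤ D for each s'
  have hinner : ∀ s' : S,
      (∑ a' : A, polNew s' a' * (β * Real.log (polNew s' a') + Qnew s' a')) -
      (∑ a' : A, polOld s' a' * (β * Real.log (polOld s' a') + Qold s' a')) ≤ D := by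
    intro s'
    have h1 : (∑ a' : A, polNew s' a' * (β * Real.log (polNew s' a') + Qnew s' a')) -
        (∑ a' : A, polNew s' a' * (β * Real.log (polNew s' a') + Qold s' a')) ≤ D := by
      rw [← Finset.sum_sub_distrib]
      have : ∀ a' ∈ (Finset.univ : Finset A),
          polNew s' a' * (β * Real.log (polNew s' a') + Qnew s' a') -
          polNew s' a' * (β * Real.log (polNew s' a') + Qold s' a') ≤ polNew s' a' * D := by
        intro a' _
        have h := hle s' a'
        have hnn := (hpolNew s').1 a'
        nlinarith [mul_le_mul_of_nonneg_left h hnn]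
      calc _ ≤ ∑ a' : A, polNew s' a' * D := Finset.sum_le_sum this
        _ = D := by rw [← Finset.sum_mul, (hpolNew s').2, one_mul]
    linarith [himpr s']
  -- D ≤ γ * D
  have hDγ : D ≤ γ * D := by
    have h1 : D = γ * ∑ s' : S, p s₀ a₀ s' *
        ((∑ a' : A, polNew s' a' * (β * Real.log (polNew s' a') + Qnew s' a')) -
         (∑ a' : A, polOld s' a' * (β * Real.log (polOld s' a') + Qold s' a'))) := by
      rw [hD, hQnew s₀ a₀, hQold s₀ a₀]
      simp only [mul_sub, Finset.sum_sub_distrib, mul_sub]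
      ring
    have h2 : ∑ s' : S, p s₀ a₀ s' *
        ((∑ a' : A, polNew s' a' * (β * Real.log (polNew s' a') + Qnew s' a')) -
         (∑ a' : A, polOld s' a' * (β * Real.log (polOld s' a') + Qold s' a'))) ≤
        ∑ s' : S, p s₀ a₀ s' * D := by
      apply Finset.sum_le_sum
      intro s' _
      exact mul_le_mul_of_nonneg_left (hinner s') (hp0 s₀ a₀ s')
    have h3 : ∑ s' : S, p s₀ a₀ s' * D = D := by
      rw [← Finset.sum_mul, hp1 s₀ a₀, one_mul]
    have h4 := mul_le_mul_of_nonneg_left h2 hγ0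
    rw [h3] at h4
    linarith
  have hD0 : D ≤ 0 := by nlinarith
  intro s a
  linarith [hle s a]
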